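/- arXiv:2605.18256 — 7 statements merged into one kernel-verified Lean document; each statement's English description precedes it below -/
import Mathlib

section
/- Stability implies positivity: let X be a compact interval, k : X×X → ℝ continuous positive, p : X → ℝ nonnegative bounded. Suppose there exist λ > 0 and a continuous function φ : X → ℝ with φ > 0 on X such that φ(x) − ∫_X k(x,y) e^{−p(y)} φ(y) dy = λ φ(x) for all x. If z : X → ℝ is bounded, lower semicontinuous, and satisfies z(x) ≥ ∫_X k(x,y) e^{−p(y)} z(y) dy for all x ∈ X, then z ≥ 0 on X. -/
open MeasureTheory Real Set

set_option maxHeartbeats 1000000 in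
/-- Stability implies positivity: a positive principal eigenpair with `λ > 0`
forces supersolutions of the linear integral inequality to be nonnegative. -/
theorem stmt5 (A : ℝ) (hA : 0 < A) (k : ℝ → ℝ → ℝ) (p z φ : ℝ → ℝ) (lam : ℝ)
    (hkc : ContinuousOn (fun q : ℝ × ℝ => k q.1 q.2) (Set.Icc 0 A ×ˢ Set.Icc 0 A))
    (hkpos : ∀ x ∈ Set.Icc (0:ℝ) A, ∀ y ∈ Set.Icc (0:ℝ) A, 0 < k x y)
    (hpm : Measurable p) (hpnn : ∀ x, 0 ≤ p x) (hpb : ∃ C, ∀ x, p x ≤ C)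
    (hlam : 0 < lam)
    (hφc : ContinuousOn φ (Set.Icc 0 A)) (hφpos : ∀ x ∈ Set.Icc (0:ℝ) A, 0 < φ x)
    (heig : ∀ x ∈ Set.Icc (0:ℝ) A,
      φ x - (∫ y in Set.Icc (0:ℝ) A, k x y * Real.exp (-(p y)) * φ y) = lam * φ x)
    (hzb : ∃ C, ∀ x, |z x| ≤ C) (hzm : Measurable z)
    (hzlsc : LowerSemicontinuousOn z (Set.Icc 0 A))
    (hineq : ∀ x ∈ Set.Icc (0:ℝ) A,
      (∫ y in Set.Icc (0:ℝ) A, k x y * Real.exp (-(p y)) * z y) ≤ z x) :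
    ∀ x ∈ Set.Icc (0:ℝ) A, 0 ≤ z x := by
  obtain ⟨C, hC⟩ := hzb
  have hC0 : 0 ≤ C := le_trans (abs_nonneg _) (hC 0)
  have hIcc : IsCompact (Set.Icc (0:ℝ) A) := isCompact_Icc
  have hne : (Set.Icc (0:ℝ) A).Nonempty := Set.nonempty_Icc.2 hA.le
  -- positive lower bound for φ
  obtain ⟨x₀, hx₀, hmin⟩ := hIcc.exists_isMinOn hne hφc
  set δ := φ x₀ with hδ
  have hδpos : 0 < δ := hφpos x₀ hx₀
  -- the set of quotients
  set S : Set ℝ := (fun x => z x / φ x) '' Set.Icc 0 A with hS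
  have hSne : S.Nonempty := hne.image _
  have hSbdd : BddBelow S := by
    refine ⟨-(C / δ), ?_⟩
    rintro v ⟨x, hx, rfl⟩
    have hφx : 0 < φ x := hφpos x hx
    have h1 : -C ≤ z x := neg_le_of_abs_le (hC x)
    have h3 : C / φ x ≤ C / δ := by gcongr; exact hmin hx
    have h2 : -C / φ x ≤ z x / φ x := by gcongr
    calc -(C / δ) ≤ -(C / φ x) := by linarith
      _ = -C / φ x := by ring
      _ ≤ z x / φ x := h2
  set m : ℝ := sInf S with hm
  -- z x ≥ m * φ x on the interval
  have hzm' : ∀ x ∈ Set.Icc (0:ℝ) A, m * φ x ≤ z x := by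
    intro x hx
    have hφx : 0 < φ x := hφpos x hx
    have : m ≤ z x / φ x := csInf_le hSbdd ⟨x, hx, rfl⟩
    exact (le_div_iff₀ hφx).1 this
  -- integrability facts
  have hkint : ∀ x ∈ Set.Icc (0:ℝ) A, ∃ Ck, 0 ≤ Ck ∧ ∀ y ∈ Set.Icc (0:ℝ) A, |k x y| ≤ Ck := by
    intro x hx
    have hkx : ContinuousOn (fun y => k x y) (Set.Icc 0 A) := by
      have := hkc.comp (f := fun y : ℝ => ((x : ℝ), y))
        (Continuous.continuousOn (by continuity)) (fun y hy => ⟨hx, hy⟩)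
      exact this
    obtain ⟨y₁, hy₁, hmax⟩ := hIcc.exists_isMaxOn hne (hkx.abs)
    exact ⟨|k x y₁|, abs_nonneg _, fun y hy => hmax hy⟩
  -- key estimate: for every x, m*(1-lam) ≤ z x / φ x
  have hkey : ∀ x ∈ Set.Icc (0:ℝ) A, m * (1 - lam) * φ x ≤ z x := by
    intro x hx
    obtain ⟨Ck, hCk0, hCk⟩ := hkint x hx
    have hkx : ContinuousOn (fun y => k x y) (Set.Icc 0 A) := by
      have := hkc.comp (f := fun y : ℝ => ((x : ℝ), y))
        (Continuous.continuousOn (by continuity)) (fun y hy => ⟨hx, hy⟩)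
      exact this
    have hkxm : AEStronglyMeasurable (fun y => k x y)
        (volume.restrict (Set.Icc (0:ℝ) A)) :=
      hkx.aestronglyMeasurable measurableSet_Icc
    have hexpm : AEStronglyMeasurable (fun y => Real.exp (-(p y)))
        (volume.restrict (Set.Icc (0:ℝ) A)) :=
      (Real.continuous_exp.measurable.comp hpm.neg).aestronglyMeasurable
    have hφm : AEStronglyMeasurable φ (volume.restrict (Set.Icc (0:ℝ) A)) :=
      hφc.aestronglyMeasurable measurableSet_Icc
    -- integrability of both integrands
    have hfin : volume (Set.Icc (0:ℝ) A) < ⊤ := by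
      simp [Real.volume_Icc]
    have hintz : IntegrableOn (fun y => k x y * Real.exp (-(p y)) * z y)
        (Set.Icc 0 A) volume := by
      refine Integrable.mono' (g := fun _ => Ck * 1 * C)
        (integrable_const _) ?_ ?_
      · exact (hkxm.mul hexpm).mul hzm.aestronglyMeasurable
      · filter_upwards [ae_restrict_mem measurableSet_Icc] with y hy
        have h1 : |k x y| ≤ Ck := hCk y hy
        have h2 : |Real.exp (-(p y))| ≤ 1 := by
          rw [abs_of_pos (Real.exp_pos _)]
          exact Real.exp_le_one_iff.2 (by linarith [hpnn y])
        have h3 : |z y| ≤ C := hC y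
        calc ‖k x y * Real.exp (-(p y)) * z y‖
            = |k x y| * |Real.exp (-(p y))| * |z y| := by
              simp [Real.norm_eq_abs, abs_mul]
          _ ≤ Ck * 1 * C := by
              gcongr <;> first | exact abs_nonneg _ | exact h3
    obtain ⟨Cφ, hCφ0, hCφ⟩ : ∃ Cφ, 0 ≤ Cφ ∧ ∀ y ∈ Set.Icc (0:ℝ) A, |φ y| ≤ Cφ := by
      obtain ⟨y₁, hy₁, hmax⟩ := hIcc.exists_isMaxOn hne hφc.abs
      exact ⟨|φ y₁|, abs_nonneg _, fun y hy => hmax hy⟩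
    have hintφ : IntegrableOn (fun y => k x y * Real.exp (-(p y)) * φ y)
        (Set.Icc 0 A) volume := by
      refine Integrable.mono' (g := fun _ => Ck * 1 * Cφ)
        (integrable_const _) ?_ ?_
      · exact (hkxm.mul hexpm).mul hφm
      · filter_upwards [ae_restrict_mem measurableSet_Icc] with y hy
        have h1 : |k x y| ≤ Ck := hCk y hy
        have h2 : |Real.exp (-(p y))| ≤ 1 := by
          rw [abs_of_pos (Real.exp_pos _)]
          exact Real.exp_le_one_iff.2 (by linarith [hpnn y])
        calc ‖k x y * Real.exp (-(p y)) * φ y‖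
            = |k x y| * |Real.exp (-(p y))| * |φ y| := by
              simp [Real.norm_eq_abs, abs_mul]
          _ ≤ Ck * 1 * Cφ := by
              gcongr <;> first | exact abs_nonneg _ | exact hCφ y hy
    -- monotonicity of the integral
    have hmono : (∫ y in Set.Icc (0:ℝ) A, k x y * Real.exp (-(p y)) * (m * φ y))
        ≤ ∫ y in Set.Icc (0:ℝ) A, k x y * Real.exp (-(p y)) * z y := by
      refine setIntegral_mono_on
        ((hintφ.const_mul m).congr (Filter.EventuallyEq.of_eq (by funext y; ring)))
        hintz measurableSet_Icc ?_
      · intro y hy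
        have hk : 0 < k x y := hkpos x hx y hy
        have he : 0 < Real.exp (-(p y)) := Real.exp_pos _
        have := hzm' y hy
        nlinarith [mul_pos hk he]
    have hval : (∫ y in Set.Icc (0:ℝ) A, k x y * Real.exp (-(p y)) * (m * φ y))
        = m * (1 - lam) * φ x := by
      have h1 : (∫ y in Set.Icc (0:ℝ) A, k x y * Real.exp (-(p y)) * (m * φ y))
          = m * ∫ y in Set.Icc (0:ℝ) A, k x y * Real.exp (-(p y)) * φ y := by
        rw [← integral_const_mul]
        congr 1; funext y; ring
      have h2 : (∫ y in Set.Icc (0:ℝ) A, k x y * Real.exp (-(p y)) * φ y)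
          = (1 - lam) * φ x := by
        have := heig x hx; linarith
      rw [h1, h2]; ring
    have := hineq x hx
    linarith [hval ▸ hmono]
  -- conclude m*(1-lam) ≤ m, hence 0 ≤ m
  have hle : m * (1 - lam) ≤ m := by
    refine le_csInf hSne ?_
    rintro v ⟨x, hx, rfl⟩
    have hφx : 0 < φ x := hφpos x hx
    exact (le_div_iff₀ hφx).2 (hkey x hx)
  have hm0 : 0 ≤ m := by nlinarith
  intro x hx
  have := hzm' x hx
  have hφx : 0 < φ x := hφpos x hx
  nlinarith
end

section
/- Comparison principle for nonlinear integral inequalities: let X be a compact interval, k : X×X → ℝ continuous positive, and g : ℝ → ℝ a C¹ function that is concave, increasing, with g(0) = 0 and g ≤ 1. Let U₁ be nonnegative, bounded, lower semicontinuous and U₂ nonnegative, bounded, upper semicontinuous, satisfying U₂(x) − ∫_X k(x,y) g(U₂(y)) dy ≤ U₁(x) − ∫_X k(x,y) g(U₁(y)) dy for all x. Assume there exist λ > 0 and continuous φ > 0 with φ(x) − ∫_X k(x,y) g'(U₁(y)) φ(y) dy = λ φ(x) for all x. Then U₂ ≤ U₁ on X. -/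
open MeasureTheory Real Set

/-!
Concavity of `g` gives `g U₁ - g U₂ ≥ g' U₁ * (U₁ - U₂)`, so `z = U₁ - U₂` is a supersolution
`z ≥ T z` of the positive linear operator `T f x = ∫ k x y * g' (U₁ y) * f y`, for which `φ` is an
eigenfunction with eigenvalue `1 - λ < 1`. If `t₀` is the least `t ≥ 0` with `z + t φ ≥ 0`, then
`z + (1 - λ) t₀ φ ≥ T (z + t₀ φ) ≥ 0`, and minimality of `t₀` forces `t₀ = 0`.
-/

theorem ConcaveOn.sub_le_deriv_mul_sub {S : Set ℝ} {g : ℝ → ℝ} (hg : ConcaveOn ℝ S g)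
    {a b : ℝ} (ha : a ∈ S) (hb : b ∈ S) (hd : DifferentiableAt ℝ g a) :
    g b - g a ≤ deriv g a * (b - a) := by
  rcases lt_trichotomy a b with hab | rfl | hba
  · have hslope := hg.slope_le_deriv ha hb hab hd
    rw [slope_def_field, div_le_iff₀ (sub_pos.2 hab)] at hslope
    exact hslope
  · simp
  · have hslope := hg.deriv_le_slope hb ha hba hd
    rw [slope_def_field, le_div_iff₀ (sub_pos.2 hba)] at hslope
    linarith

theorem nonneg_of_forall_add_mul_nonneg {α : Type*} {s : Set α} {z φ : α → ℝ} {c : ℝ}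
    (hc : c < 1) (hφ : ∀ x ∈ s, 0 ≤ φ x) (hex : ∃ t, ∀ x ∈ s, 0 ≤ z x + t * φ x)
    (hstep : ∀ t, (∀ x ∈ s, 0 ≤ z x + t * φ x) → ∀ x ∈ s, 0 ≤ z x + c * t * φ x) :
    ∀ x ∈ s, 0 ≤ z x := by
  set S : Set ℝ := Ici 0 ∩ ⋂ x ∈ s, {t | 0 ≤ z x + t * φ x}
  have hmem {t : ℝ} : t ∈ S ↔ 0 ≤ t ∧ ∀ x ∈ s, 0 ≤ z x + t * φ x := by simp [S]
  have hup {t t' : ℝ} (ht : ∀ x ∈ s, 0 ≤ z x + t * φ x) (htt' : t ≤ t') (ht' : 0 ≤ t') :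
      t' ∈ S :=
    hmem.2 ⟨ht', fun x hx => (ht x hx).trans (by gcongr; exact hφ x hx)⟩
  obtain ⟨t, ht⟩ := hex
  have hclosed : IsClosed S :=
    isClosed_Ici.inter (isClosed_biInter fun x _ => isClosed_le continuous_const (by fun_prop))
  have hbdd : BddBelow S := ⟨0, fun _ ht => (hmem.1 ht).1⟩
  have hne : S.Nonempty := ⟨_, hup ht (le_max_left t 0) (le_max_right t 0)⟩
  obtain ⟨ht₀, hzt₀⟩ := hmem.1 (hclosed.csInf_mem hne hbdd)
  have hle : sInf S ≤ max c 0 * sInf S :=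
    csInf_le hbdd (hup (hstep _ hzt₀) (by gcongr; exact le_max_left c 0) (by positivity))
  have hzero : sInf S = 0 := by nlinarith [max_lt hc one_pos]
  simpa [hzero] using hzt₀

theorem exists_forall_nonneg_add_mul {α : Type*} {s : Set α} {z φ : α → ℝ} {C δ : ℝ}
    (hδ : 0 < δ) (hz : ∀ x ∈ s, -C ≤ z x) (hφ : ∀ x ∈ s, δ ≤ φ x) :
    ∃ t, ∀ x ∈ s, 0 ≤ z x + t * φ x := by
  refine ⟨|C| / δ, fun x hx => ?_⟩
  have hφx : |C| ≤ |C| / δ * φ x := by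
    calc |C| = |C| / δ * δ := (div_mul_cancel₀ _ hδ.ne').symm
      _ ≤ |C| / δ * φ x := by gcongr; exact hφ x hx
  linarith [hz x hx, le_abs_self C]

section Integral

variable {α : Type*} [MeasurableSpace α] {μ : Measure α} {s : Set α}

theorem MeasureTheory.IntegrableOn.mul_of_mapsTo_isCompact {f u : α → ℝ} {K : Set ℝ}
    (hf : IntegrableOn f s μ) (hs : MeasurableSet s) (hu : AEStronglyMeasurable u (μ.restrict s))
    (hK : IsCompact K) (huK : MapsTo u s K) : IntegrableOn (fun y => f y * u y) s μ := by
  obtain ⟨C, hC⟩ := hK.isBounded.exists_norm_le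
  exact hf.mul_bdd hu (ae_restrict_of_forall_mem hs fun y hy => hC _ (huK hy))

theorem setIntegral_mul_deriv_mul_sub_le {g : ℝ → ℝ} (hg : ConcaveOn ℝ univ g)
    (hgd : Differentiable ℝ g) (hs : MeasurableSet s) {w u v : α → ℝ} (hw : ∀ y ∈ s, 0 ≤ w y)
    (hlin : IntegrableOn (fun y => w y * deriv g (u y) * (u y - v y)) s μ)
    (hu : IntegrableOn (fun y => w y * g (u y)) s μ)
    (hv : IntegrableOn (fun y => w y * g (v y)) s μ) :
    ∫ y in s, w y * deriv g (u y) * (u y - v y) ∂μ ≤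
      (∫ y in s, w y * g (u y) ∂μ) - ∫ y in s, w y * g (v y) ∂μ := by
  rw [← integral_sub hu hv]
  refine setIntegral_mono_on hlin (hu.sub hv) hs fun y hy => ?_
  have htangent := hg.sub_le_deriv_mul_sub (mem_univ (u y)) (mem_univ (v y)) (hgd (u y))
  rw [mul_assoc, ← mul_sub]
  exact mul_le_mul_of_nonneg_left (by linarith) (hw y hy)

theorem nonneg_of_setIntegral_le_of_eigenfunction (hs : MeasurableSet s) {w : α → α → ℝ}
    {z φ : α → ℝ} {c : ℝ} (hc : c < 1) (hw : ∀ x ∈ s, ∀ y ∈ s, 0 ≤ w x y)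
    (hwz : ∀ x ∈ s, IntegrableOn (fun y => w x y * z y) s μ)
    (hwφ : ∀ x ∈ s, IntegrableOn (fun y => w x y * φ y) s μ)
    (hz : ∀ x ∈ s, ∫ y in s, w x y * z y ∂μ ≤ z x)
    (hφ : ∀ x ∈ s, ∫ y in s, w x y * φ y ∂μ = c * φ x)
    (hφ0 : ∀ x ∈ s, 0 ≤ φ x) (hex : ∃ t, ∀ x ∈ s, 0 ≤ z x + t * φ x) :
    ∀ x ∈ s, 0 ≤ z x := by
  refine nonneg_of_forall_add_mul_nonneg hc hφ0 hex fun t ht x hx => ?_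
  calc 0 ≤ ∫ y in s, w x y * (z y + t * φ y) ∂μ :=
        setIntegral_nonneg hs fun y hy => mul_nonneg (hw x hx y hy) (ht y hy)
    _ = (∫ y in s, w x y * z y ∂μ) + t * ∫ y in s, w x y * φ y ∂μ := by
        simp_rw [mul_add, mul_left_comm (w x _) t]
        rw [integral_add (hwz x hx) ((hwφ x hx).const_mul t), integral_const_mul]
    _ ≤ z x + c * t * φ x := by
        rw [hφ x hx]
        linarith [hz x hx]

end Integral

theorem ContinuousOn.integrableOn_mul_comp {X : Type*} [TopologicalSpace X] [MeasurableSpace X]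
    [OpensMeasurableSpace X] [T2Space X] {μ : Measure X} [IsFiniteMeasureOnCompacts μ]
    {s : Set X} (hs : IsCompact s) {f : X → ℝ} (hf : ContinuousOn f s) {h : ℝ → ℝ}
    (hh : Continuous h) {U : X → ℝ} (hU : Measurable U) {a b : ℝ} (hUab : ∀ y, U y ∈ Icc a b) :
    IntegrableOn (fun y => f y * h (U y)) s μ :=
  (hf.integrableOn_compact hs).mul_of_mapsTo_isCompact hs.measurableSet
    (hh.measurable.comp hU).aestronglyMeasurable (isCompact_Icc.image hh)
    fun y _ => mem_image_of_mem h (hUab y)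

theorem stmt6_general (A : ℝ) (k : ℝ → ℝ → ℝ) (g U₁ U₂ φ : ℝ → ℝ) (lam : ℝ)
    (hkc : ContinuousOn (fun q : ℝ × ℝ => k q.1 q.2) (Set.Icc 0 A ×ˢ Set.Icc 0 A))
    (hkpos : ∀ x ∈ Set.Icc (0:ℝ) A, ∀ y ∈ Set.Icc (0:ℝ) A, 0 < k x y)
    (hg : ContDiff ℝ 1 g) (hgconc : ConcaveOn ℝ Set.univ g)
    (hgmono : Monotone g)
    (hU₁nn : ∀ x, 0 ≤ U₁ x) (hU₁b : ∃ C, ∀ x, U₁ x ≤ C)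
    (hU₂nn : ∀ x, 0 ≤ U₂ x) (hU₂b : ∃ C, ∀ x, U₂ x ≤ C)
    (hU₁m : Measurable U₁) (hU₂m : Measurable U₂)
    (hcomp : ∀ x ∈ Set.Icc (0:ℝ) A,
      U₂ x - (∫ y in Set.Icc (0:ℝ) A, k x y * g (U₂ y)) ≤
      U₁ x - (∫ y in Set.Icc (0:ℝ) A, k x y * g (U₁ y)))
    (hlam : 0 < lam)
    (hφc : ContinuousOn φ (Set.Icc 0 A)) (hφpos : ∀ x ∈ Set.Icc (0:ℝ) A, 0 < φ x)
    (heig : ∀ x ∈ Set.Icc (0:ℝ) A,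
      φ x - (∫ y in Set.Icc (0:ℝ) A, k x y * deriv g (U₁ y) * φ y) = lam * φ x) :
    ∀ x ∈ Set.Icc (0:ℝ) A, U₂ x ≤ U₁ x := by
  set I := Icc (0:ℝ) A
  have hI : MeasurableSet I := measurableSet_Icc
  obtain ⟨C₁, hC₁⟩ := hU₁b
  obtain ⟨C₂, hC₂⟩ := hU₂b
  have hU₁I y : U₁ y ∈ Icc 0 C₁ := ⟨hU₁nn y, hC₁ y⟩
  have hU₂I y : U₂ y ∈ Icc 0 C₂ := ⟨hU₂nn y, hC₂ y⟩
  have hkx x (hx : x ∈ I) : ContinuousOn (k x) I := hkc.uncurry_left x hx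
  have hw x (hx : x ∈ I) : IntegrableOn (fun y => k x y * deriv g (U₁ y)) I :=
    (hkx x hx).integrableOn_mul_comp isCompact_Icc (hg.continuous_deriv le_rfl) hU₁m hU₁I
  have hwz x (hx : x ∈ I) : IntegrableOn (fun y => k x y * deriv g (U₁ y) * (U₁ y - U₂ y)) I :=
    (hw x hx).mul_of_mapsTo_isCompact hI (hU₁m.sub hU₂m).aestronglyMeasurable
      (isCompact_Icc (a := -C₂) (b := C₁))
      fun y _ => ⟨by linarith [hU₁nn y, hC₂ y], by linarith [hU₂nn y, hC₁ y]⟩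
  have hwφ x (hx : x ∈ I) : IntegrableOn (fun y => k x y * deriv g (U₁ y) * φ y) I :=
    (hw x hx).mul_of_mapsTo_isCompact hI (hφc.aestronglyMeasurable hI)
      (isCompact_Icc.image_of_continuousOn hφc) (mapsTo_image φ I)
  have hsuper x (hx : x ∈ I) : ∫ y in I, k x y * deriv g (U₁ y) * (U₁ y - U₂ y) ≤ U₁ x - U₂ x :=
    (setIntegral_mul_deriv_mul_sub_le hgconc (hg.differentiable one_ne_zero) hI
      (fun y hy => (hkpos x hx y hy).le) (hwz x hx)
      ((hkx x hx).integrableOn_mul_comp isCompact_Icc hg.continuous hU₁m hU₁I)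
      ((hkx x hx).integrableOn_mul_comp isCompact_Icc hg.continuous hU₂m hU₂I)).trans
      (by linarith [hcomp x hx])
  obtain ⟨δ, hδ, hφδ⟩ := isCompact_Icc.exists_forall_le' hφc hφpos
  intro x hx
  have hz : 0 ≤ U₁ x - U₂ x :=
    nonneg_of_setIntegral_le_of_eigenfunction hI (c := 1 - lam) (by linarith)
      (fun x hx y hy => mul_nonneg (hkpos x hx y hy).le hgmono.deriv_nonneg) hwz hwφ hsuper
      (fun x hx => by linarith [heig x hx]) (fun x hx => (hφpos x hx).le)
      (exists_forall_nonneg_add_mul (C := C₂) hδ (fun y _ => by linarith [hU₁nn y, hC₂ y]) hφδ)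
      x hx
  linarith

/-- Comparison principle for nonlinear integral inequalities. -/
theorem stmt6 (A : ℝ) (hA : 0 < A) (k : ℝ → ℝ → ℝ) (g U₁ U₂ φ : ℝ → ℝ) (lam : ℝ)
    (hkc : ContinuousOn (fun q : ℝ × ℝ => k q.1 q.2) (Set.Icc 0 A ×ˢ Set.Icc 0 A))
    (hkpos : ∀ x ∈ Set.Icc (0:ℝ) A, ∀ y ∈ Set.Icc (0:ℝ) A, 0 < k x y)
    (hg : ContDiff ℝ 1 g) (hgconc : ConcaveOn ℝ Set.univ g)
    (hgmono : Monotone g) (hg0 : g 0 = 0) (hg1 : ∀ x, g x ≤ 1)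
    (hU₁nn : ∀ x, 0 ≤ U₁ x) (hU₁b : ∃ C, ∀ x, U₁ x ≤ C)
    (hU₂nn : ∀ x, 0 ≤ U₂ x) (hU₂b : ∃ C, ∀ x, U₂ x ≤ C)
    (hU₁m : Measurable U₁) (hU₂m : Measurable U₂)
    (hU₁lsc : LowerSemicontinuousOn U₁ (Set.Icc 0 A))
    (hU₂usc : UpperSemicontinuousOn U₂ (Set.Icc 0 A))
    (hcomp : ∀ x ∈ Set.Icc (0:ℝ) A,
      U₂ x - (∫ y in Set.Icc (0:ℝ) A, k x y * g (U₂ y)) ≤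
      U₁ x - (∫ y in Set.Icc (0:ℝ) A, k x y * g (U₁ y)))
    (hlam : 0 < lam)
    (hφc : ContinuousOn φ (Set.Icc 0 A)) (hφpos : ∀ x ∈ Set.Icc (0:ℝ) A, 0 < φ x)
    (heig : ∀ x ∈ Set.Icc (0:ℝ) A,
      φ x - (∫ y in Set.Icc (0:ℝ) A, k x y * deriv g (U₁ y) * φ y) = lam * φ x) :
    ∀ x ∈ Set.Icc (0:ℝ) A, U₂ x ≤ U₁ x :=
  stmt6_general A k g U₁ U₂ φ lam hkc hkpos hg hgconc hgmono hU₁nn hU₁b hU₂nn hU₂b hU₁m hU₂m hcomp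
    hlam hφc hφpos heig
end

section
/- Monotonicity of principal eigenvalues: let X be a compact interval, k : X×X → ℝ continuous positive, and U, U' : X → ℝ bounded measurable with U ≤ U'. Suppose (λ, φ) and (λ', φ') are eigenpairs with φ, φ' continuous and strictly positive satisfying φ(x) − ∫_X k(x,y) e^{−U(y)} φ(y) dy = λ φ(x) and φ'(x) − ∫_X k(x,y) e^{−U'(y)} φ'(y) dy = λ' φ'(x) for all x ∈ X. Then λ ≤ λ'. -/
/-!
Let `x₀` minimise `φ / φ'` on the interval and put `ε = φ x₀ / φ' x₀`, so that `ε φ' ≤ φ`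
with contact at `x₀`. Since `k ≥ 0` and `e^{-U'} ≤ e^{-U}`, integrating against the kernel
preserves this order, and evaluating both eigen-equations at the contact point gives
`(1 - lam') φ x₀ ≤ (1 - lam) φ x₀`, i.e. `lam ≤ lam'`.
-/

open MeasureTheory Real Set

theorem IsCompact.exists_mul_le_and_eq_of_pos {X : Type*} [TopologicalSpace X] {s : Set X}
    (hs : IsCompact s) (hne : s.Nonempty) {φ φ' : X → ℝ} (hφ : ContinuousOn φ s) (hφ' : ContinuousOn φ' s)
    (hφ'pos : ∀ y ∈ s, 0 < φ' y) :
    ∃ x₀ ∈ s, ∃ ε : ℝ, (∀ y ∈ s, ε * φ' y ≤ φ y) ∧ ε * φ' x₀ = φ x₀ := by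
  obtain ⟨x₀, hx₀, hmin⟩ :=
    hs.exists_isMinOn hne (hφ.div hφ' fun y hy => (hφ'pos y hy).ne')
  refine ⟨x₀, hx₀, φ x₀ / φ' x₀, fun y hy => ?_, div_mul_cancel₀ _ (hφ'pos x₀ hx₀).ne'⟩
  exact (le_div_iff₀ (hφ'pos y hy)).1 (hmin hy)

section

variable {X : Type*} [TopologicalSpace X] [T2Space X] [MeasurableSpace X] [OpensMeasurableSpace X]
  {μ : Measure X} [IsFiniteMeasureOnCompacts μ] {s : Set X}

theorem integrableOn_mul_exp_neg_mul (hs : IsCompact s) {f g V : X → ℝ}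
    (hf : ContinuousOn f s) (hg : ContinuousOn g s) (hVm : Measurable V)
    (hV : ∃ C, ∀ y, C ≤ V y) :
    IntegrableOn (fun y => f y * exp (-V y) * g y) s μ := by
  obtain ⟨C, hC⟩ := hV
  have hfg : IntegrableOn (fun y => f y * g y) s μ := (hf.mul hg).integrableOn_compact hs
  have hbound : ∀ y, ‖exp (-V y)‖ ≤ exp (-C) := fun y => by
    rw [norm_of_nonneg (exp_pos _).le]
    exact exp_le_exp.2 (neg_le_neg (hC y))
  refine (hfg.bdd_mul hVm.neg.exp.aestronglyMeasurable (ae_of_all _ hbound)).congr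
    (ae_of_all _ fun y => ?_)
  simp only [Pi.neg_apply]
  ring

theorem setIntegral_mul_exp_neg_mul_mono (hs : IsCompact s)
    {κ V V' ψ ψ' : X → ℝ} {ε : ℝ}
    (hκ : ContinuousOn κ s) (hκ_nonneg : ∀ y ∈ s, 0 ≤ κ y)
    (hVm : Measurable V) (hV'm : Measurable V') (hV : ∃ C, ∀ y, C ≤ V y)
    (hVV' : ∀ y, V y ≤ V' y)
    (hψ : ContinuousOn ψ s) (hψ' : ContinuousOn ψ' s) (hψ_nonneg : ∀ y ∈ s, 0 ≤ ψ y)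
    (hεψ : ∀ y ∈ s, ε * ψ' y ≤ ψ y) :
    ε * ∫ y in s, κ y * exp (-V' y) * ψ' y ∂μ ≤ ∫ y in s, κ y * exp (-V y) * ψ y ∂μ := by
  have hV' : ∃ C, ∀ y, C ≤ V' y :=
    hV.imp fun C hC y => (hC y).trans (hVV' y)
  rw [← integral_const_mul]
  refine setIntegral_mono_on ((integrableOn_mul_exp_neg_mul hs hκ hψ' hV'm hV').const_mul ε)
    (integrableOn_mul_exp_neg_mul hs hκ hψ hVm hV) hs.measurableSet fun y hy => ?_
  have hexp : exp (-V' y) ≤ exp (-V y) := exp_le_exp.2 (neg_le_neg (hVV' y))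
  calc ε * (κ y * exp (-V' y) * ψ' y) = κ y * exp (-V' y) * (ε * ψ' y) := by ring
    _ ≤ κ y * exp (-V' y) * ψ y := by
        gcongr
        · exact mul_nonneg (hκ_nonneg y hy) (exp_pos _).le
        · exact hεψ y hy
    _ ≤ κ y * exp (-V y) * ψ y := by
        gcongr
        · exact hψ_nonneg y hy
        · exact hκ_nonneg y hy

end

theorem stmt11_general (A : ℝ) (hA : 0 < A) (k : ℝ → ℝ → ℝ) (U U' φ φ' : ℝ → ℝ) (lam lam' : ℝ)
    (hkc : ContinuousOn (fun q : ℝ × ℝ => k q.1 q.2) (Set.Icc 0 A ×ˢ Set.Icc 0 A))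
    (hkpos : ∀ x ∈ Set.Icc (0:ℝ) A, ∀ y ∈ Set.Icc (0:ℝ) A, 0 < k x y)
    (hUm : Measurable U) (hU'm : Measurable U')
    (hUb : ∃ C, ∀ x, |U x| ≤ C)
    (hle : ∀ x, U x ≤ U' x)
    (hφc : ContinuousOn φ (Set.Icc 0 A)) (hφpos : ∀ x ∈ Set.Icc (0:ℝ) A, 0 < φ x)
    (hφ'c : ContinuousOn φ' (Set.Icc 0 A)) (hφ'pos : ∀ x ∈ Set.Icc (0:ℝ) A, 0 < φ' x)
    (heig : ∀ x ∈ Set.Icc (0:ℝ) A,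
      φ x - (∫ y in Set.Icc (0:ℝ) A, k x y * Real.exp (-(U y)) * φ y) = lam * φ x)
    (heig' : ∀ x ∈ Set.Icc (0:ℝ) A,
      φ' x - (∫ y in Set.Icc (0:ℝ) A, k x y * Real.exp (-(U' y)) * φ' y) = lam' * φ' x) :
    lam ≤ lam' := by
  obtain ⟨x₀, hx₀, ε, hεφ, hcontact⟩ := isCompact_Icc.exists_mul_le_and_eq_of_pos
    ⟨0, left_mem_Icc.2 hA.le⟩ hφc hφ'c hφ'pos
  have hkx₀ : ContinuousOn (k x₀) (Icc 0 A) :=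
    hkc.comp (Continuous.prodMk_right x₀).continuousOn fun y hy => mk_mem_prod hx₀ hy
  obtain ⟨C, hC⟩ := hUb
  have hU : ∃ C, ∀ y, C ≤ U y := ⟨-C, fun y => neg_le_of_abs_le (hC y)⟩
  have hmono := setIntegral_mul_exp_neg_mul_mono (μ := volume) isCompact_Icc hkx₀
    (fun y hy => (hkpos x₀ hx₀ y hy).le) hUm hU'm hU hle hφc hφ'c
    (fun y hy => (hφpos y hy).le) hεφ
  have hcontact_eig : ε * ∫ y in Icc 0 A, k x₀ y * exp (-U' y) * φ' y = φ x₀ - lam' * φ x₀ := by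
    linear_combination (-ε) * heig' x₀ hx₀ + (1 - lam') * hcontact
  have hlam : lam * φ x₀ ≤ lam' * φ x₀ := by
    linarith [heig x₀ hx₀]
  exact le_of_mul_le_mul_right hlam (hφpos x₀ hx₀)

/-- Monotonicity of principal eigenvalues: if `U ≤ U'` and `(lam, φ)`, `(lam', φ')`
are positive eigenpairs of the operators with kernels `k(x,y)e^{−U(y)}` and
`k(x,y)e^{−U'(y)}` respectively, then `lam ≤ lam'`. -/
theorem stmt11 (A : ℝ) (hA : 0 < A) (k : ℝ → ℝ → ℝ) (U U' φ φ' : ℝ → ℝ) (lam lam' : ℝ)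
    (hkc : ContinuousOn (fun q : ℝ × ℝ => k q.1 q.2) (Set.Icc 0 A ×ˢ Set.Icc 0 A))
    (hkpos : ∀ x ∈ Set.Icc (0:ℝ) A, ∀ y ∈ Set.Icc (0:ℝ) A, 0 < k x y)
    (hUm : Measurable U) (hU'm : Measurable U')
    (hUb : ∃ C, ∀ x, |U x| ≤ C) (hU'b : ∃ C, ∀ x, |U' x| ≤ C)
    (hle : ∀ x, U x ≤ U' x)
    (hφc : ContinuousOn φ (Set.Icc 0 A)) (hφpos : ∀ x ∈ Set.Icc (0:ℝ) A, 0 < φ x)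
    (hφ'c : ContinuousOn φ' (Set.Icc 0 A)) (hφ'pos : ∀ x ∈ Set.Icc (0:ℝ) A, 0 < φ' x)
    (heig : ∀ x ∈ Set.Icc (0:ℝ) A,
      φ x - (∫ y in Set.Icc (0:ℝ) A, k x y * Real.exp (-(U y)) * φ y) = lam * φ x)
    (heig' : ∀ x ∈ Set.Icc (0:ℝ) A,
      φ' x - (∫ y in Set.Icc (0:ℝ) A, k x y * Real.exp (-(U' y)) * φ' y) = lam' * φ' x) :
    lam ≤ lam' :=
  stmt11_general A hA k U U' φ φ' lam lam' hkc hkpos hUm hU'm hUb hle hφc hφpos hφ'c hφ'pos heig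
    heig'
end

section
/- Principal eigenvalues with positive eigenfunctions for positive kernels coincide: let X be a compact interval and K : X×X → ℝ continuous positive. If (λ₁, φ₁) and (λ₂, φ₂) both satisfy φᵢ(x) − ∫_X K(x,y) φᵢ(y) dy = λᵢ φᵢ(x) for all x, with φᵢ continuous and strictly positive, then λ₁ = λ₂. -/
open MeasureTheory Real Set

lemma stmt12_aux (A : ℝ) (hA : 0 < A) (K : ℝ → ℝ → ℝ) (φ₁ φ₂ : ℝ → ℝ) (lam₁ lam₂ : ℝ)
    (hKc : ContinuousOn (fun q : ℝ × ℝ => K q.1 q.2) (Set.Icc 0 A ×ˢ Set.Icc 0 A))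
    (hKpos : ∀ x ∈ Set.Icc (0:ℝ) A, ∀ y ∈ Set.Icc (0:ℝ) A, 0 < K x y)
    (hφ₁c : ContinuousOn φ₁ (Set.Icc 0 A)) (hφ₁pos : ∀ x ∈ Set.Icc (0:ℝ) A, 0 < φ₁ x)
    (hφ₂c : ContinuousOn φ₂ (Set.Icc 0 A)) (hφ₂pos : ∀ x ∈ Set.Icc (0:ℝ) A, 0 < φ₂ x)
    (heig₁ : ∀ x ∈ Set.Icc (0:ℝ) A,
      φ₁ x - (∫ y in Set.Icc (0:ℝ) A, K x y * φ₁ y) = lam₁ * φ₁ x)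
    (heig₂ : ∀ x ∈ Set.Icc (0:ℝ) A,
      φ₂ x - (∫ y in Set.Icc (0:ℝ) A, K x y * φ₂ y) = lam₂ * φ₂ x) :
    lam₁ ≤ lam₂ := by
  have hne : (Set.Icc (0:ℝ) A).Nonempty := ⟨0, left_mem_Icc.mpr hA.le⟩
  -- minimum of φ₁/φ₂
  have hratio : ContinuousOn (fun x => φ₁ x / φ₂ x) (Set.Icc 0 A) :=
    hφ₁c.div hφ₂c (fun x hx => (hφ₂pos x hx).ne')
  obtain ⟨x₀, hx₀, hmin⟩ := isCompact_Icc.exists_isMinOn hne hratio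
  set t : ℝ := φ₁ x₀ / φ₂ x₀ with ht
  have htpos : 0 < t := div_pos (hφ₁pos x₀ hx₀) (hφ₂pos x₀ hx₀)
  have hψnonneg : ∀ y ∈ Set.Icc (0:ℝ) A, 0 ≤ φ₁ y - t * φ₂ y := by
    intro y hy
    have h1 : t ≤ φ₁ y / φ₂ y := hmin hy
    have h2 : 0 < φ₂ y := hφ₂pos y hy
    have := (le_div_iff₀ h2).mp h1
    linarith
  -- continuity of kernel slice
  have hKx₀ : ContinuousOn (fun y => K x₀ y) (Set.Icc 0 A) := by
    have : ContinuousOn (fun y : ℝ => (x₀, y)) (Set.Icc 0 A) :=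
      (Continuous.prodMk_right x₀).continuousOn
    exact hKc.comp this (fun y hy => ⟨hx₀, hy⟩)
  have hint1 : IntegrableOn (fun y => K x₀ y * φ₁ y) (Set.Icc 0 A) volume :=
    (hKx₀.mul hφ₁c).integrableOn_Icc
  have hint2 : IntegrableOn (fun y => K x₀ y * φ₂ y) (Set.Icc 0 A) volume :=
    (hKx₀.mul hφ₂c).integrableOn_Icc
  have hintpos : 0 ≤ ∫ y in Set.Icc (0:ℝ) A, K x₀ y * (φ₁ y - t * φ₂ y) := by
    apply setIntegral_nonneg measurableSet_Icc
    intro y hy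
    exact mul_nonneg (hKpos x₀ hx₀ y hy).le (hψnonneg y hy)
  have hsplit : (∫ y in Set.Icc (0:ℝ) A, K x₀ y * (φ₁ y - t * φ₂ y))
      = (∫ y in Set.Icc (0:ℝ) A, K x₀ y * φ₁ y)
        - t * ∫ y in Set.Icc (0:ℝ) A, K x₀ y * φ₂ y := by
    rw [← integral_const_mul, ← integral_sub hint1 (hint2.const_mul t)]
    congr 1; ext y; ring
  have e1 := heig₁ x₀ hx₀
  have e2 := heig₂ x₀ hx₀
  have hI1 : (∫ y in Set.Icc (0:ℝ) A, K x₀ y * φ₁ y) = (1 - lam₁) * φ₁ x₀ := by linarith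
  have hI2 : (∫ y in Set.Icc (0:ℝ) A, K x₀ y * φ₂ y) = (1 - lam₂) * φ₂ x₀ := by linarith
  have h2 : 0 < φ₂ x₀ := hφ₂pos x₀ hx₀
  have hφeq : φ₁ x₀ = t * φ₂ x₀ := by
    rw [ht, div_mul_cancel₀ _ h2.ne']
  rw [hsplit, hI1, hI2, hφeq] at hintpos
  nlinarith [mul_pos htpos h2]

/-- Uniqueness of the eigenvalue admitting a positive eigenfunction for a
positive continuous kernel. -/
theorem stmt12 (A : ℝ) (hA : 0 < A) (K : ℝ → ℝ → ℝ) (φ₁ φ₂ : ℝ → ℝ) (lam₁ lam₂ : ℝ)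
    (hKc : ContinuousOn (fun q : ℝ × ℝ => K q.1 q.2) (Set.Icc 0 A ×ˢ Set.Icc 0 A))
    (hKpos : ∀ x ∈ Set.Icc (0:ℝ) A, ∀ y ∈ Set.Icc (0:ℝ) A, 0 < K x y)
    (hφ₁c : ContinuousOn φ₁ (Set.Icc 0 A)) (hφ₁pos : ∀ x ∈ Set.Icc (0:ℝ) A, 0 < φ₁ x)
    (hφ₂c : ContinuousOn φ₂ (Set.Icc 0 A)) (hφ₂pos : ∀ x ∈ Set.Icc (0:ℝ) A, 0 < φ₂ x)
    (heig₁ : ∀ x ∈ Set.Icc (0:ℝ) A,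
      φ₁ x - (∫ y in Set.Icc (0:ℝ) A, K x y * φ₁ y) = lam₁ * φ₁ x)
    (heig₂ : ∀ x ∈ Set.Icc (0:ℝ) A,
      φ₂ x - (∫ y in Set.Icc (0:ℝ) A, K x y * φ₂ y) = lam₂ * φ₂ x) :
    lam₁ = lam₂ := by
  exact le_antisymm
    (stmt12_aux A hA K φ₁ φ₂ lam₁ lam₂ hKc hKpos hφ₁c hφ₁pos hφ₂c hφ₂pos heig₁ heig₂)
    (stmt12_aux A hA K φ₂ φ₁ lam₂ lam₁ hKc hKpos hφ₂c hφ₂pos hφ₁c hφ₁pos heig₂ heig₁)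
end

section
/- An operator and its formal adjoint with respect to a positive weight have the same principal eigenvalue: let X be a compact interval, β : X×X → ℝ continuous positive, μ, S : X → ℝ continuous positive. Then λ is an eigenvalue of L : φ ↦ φ − ∫ β(·,y) S(y)/μ(y) φ(y) dy with a positive continuous eigenfunction if and only if λ is an eigenvalue of L* : φ ↦ φ − ∫ β(y,·) S(y)/μ(y) φ(y) dy with a positive continuous eigenfunction, and in that case the two eigenvalues are equal. -/
open MeasureTheory Real Set

/-!
Let `φ > 0` satisfy `∫ k(x,y) φ(x) dx = r φ(y)`. The normalised iteration `u ↦ r⁻¹ ∫ k(·,y) u(y) dy`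
preserves the pairing `∫ u φ`. Since `k(x,y) ≥ c φ(y)` with `c > 0`, on functions with
`∫ g φ = 0` it contracts the weighted norm `∫ |g| φ` by the factor `1 - c ∫ φ / r` (Doeblin's
argument), and it maps that norm into the sup norm. Hence the iterates of `1` converge uniformly to
a positive eigenfunction of `k` with eigenvalue `r`: a positive kernel and its transpose have the
same eigenvalues with positive eigenfunctions.

The kernel of `L*` is `w(y) k(y,x) / w(x)` with `w = S / μ`, where `k(x,y) = β(x,y) S(y) / μ(y)` is
the kernel of `1 - L`, so conjugating by `w` reduces the theorem to this statement.
-/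

open Filter Topology Function

theorem exists_tendstoUniformlyOn_of_dist_le_geometric {α β : Type*} [PseudoMetricSpace β]
    [CompleteSpace β] {f : ℕ → α → β} {s : Set α} {C θ : ℝ} (hθ₀ : 0 ≤ θ) (hθ₁ : θ < 1)
    (hf : ∀ n, ∀ x ∈ s, dist (f n x) (f (n + 1) x) ≤ C * θ ^ n) :
    ∃ g : α → β, TendstoUniformlyOn f g atTop s := by
  have hcauchy (x : α) (hx : x ∈ s) : CauchySeq (f · x) :=
    cauchySeq_of_le_geometric θ C hθ₁ fun n => hf n x hx
  have hconv (x : α) : ∃ a, x ∈ s → Tendsto (f · x) atTop (𝓝 a) := by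
    by_cases hx : x ∈ s
    · obtain ⟨a, ha⟩ := cauchySeq_tendsto_of_complete (hcauchy x hx)
      exact ⟨a, fun _ => ha⟩
    · exact ⟨f 0 x, fun hx' => absurd hx' hx⟩
  choose g hg using hconv
  refine ⟨g, Metric.tendstoUniformlyOn_iff.2 fun ε hε => ?_⟩
  have hlim : Tendsto (fun n : ℕ => C * θ ^ n / (1 - θ)) atTop (𝓝 0) := by
    simpa using ((tendsto_pow_atTop_nhds_zero_of_lt_one hθ₀ hθ₁).const_mul C).div_const (1 - θ)
  filter_upwards [hlim.eventually (gt_mem_nhds hε)] with n hn x hx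
  rw [dist_comm]
  exact (dist_le_of_le_geometric_of_tendsto θ C hθ₁ (hf · x hx) (hg x hx) n).trans_lt hn

theorem ContinuousOn.uncurry_swap {α β γ : Type*} [TopologicalSpace α] [TopologicalSpace β]
    [TopologicalSpace γ] {k : α → β → γ} {s : Set α} {t : Set β}
    (hk : ContinuousOn (uncurry k) (s ×ˢ t)) : ContinuousOn (uncurry (swap k)) (t ×ˢ s) :=
  hk.comp continuous_swap.continuousOn fun _ hq => ⟨hq.2, hq.1⟩

theorem exists_mul_le_kernel_le_mul {α : Type*} [TopologicalSpace α] {s : Set α}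
    {k : α → α → ℝ} {φ : α → ℝ} (hs : IsCompact s) (hk : ContinuousOn (uncurry k) (s ×ˢ s))
    (hkpos : ∀ x ∈ s, ∀ y ∈ s, 0 < k x y) (hφ : ContinuousOn φ s) (hφpos : ∀ x ∈ s, 0 < φ x) :
    ∃ c C : ℝ, 0 < c ∧ 0 < C ∧ ∀ x ∈ s, ∀ y ∈ s, c * φ y ≤ k x y ∧ k x y ≤ C * φ y := by
  have hφ₂ : ContinuousOn (fun q : α × α => φ q.2) (s ×ˢ s) :=
    hφ.comp continuousOn_snd fun _ hq => hq.2
  obtain ⟨c, hc₀, hc⟩ := (hs.prod hs).exists_forall_le'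
    (hk.div hφ₂ fun q hq => (hφpos _ hq.2).ne') (a := 0)
    fun q hq => div_pos (hkpos _ hq.1 _ hq.2) (hφpos _ hq.2)
  obtain ⟨d, hd₀, hd⟩ := (hs.prod hs).exists_forall_le'
    (hφ₂.div hk fun q hq => (hkpos _ hq.1 _ hq.2).ne') (a := 0)
    fun q hq => div_pos (hφpos _ hq.2) (hkpos _ hq.1 _ hq.2)
  refine ⟨c, d⁻¹, hc₀, inv_pos.2 hd₀, fun x hx y hy => ⟨?_, ?_⟩⟩
  · exact (le_div_iff₀ (hφpos y hy)).1 (hc (x, y) ⟨hx, hy⟩)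
  · rw [inv_mul_eq_div, le_div_iff₀ hd₀, mul_comm]
    exact (le_div_iff₀ (hkpos x hx y hy)).1 (hd (x, y) ⟨hx, hy⟩)

variable {α : Type*} [MeasurableSpace α] {μ : Measure α} {s : Set α} {k : α → α → ℝ}
  {f g h φ : α → ℝ}

noncomputable def kernelOp (μ : Measure α) (s : Set α) (k : α → α → ℝ) (g : α → ℝ) (x : α) :
    ℝ :=
  ∫ y in s, k x y * g y ∂μ

theorem abs_kernelOp_le_kernelOp_abs (hs : MeasurableSet s)
    (hk₀ : ∀ x ∈ s, ∀ y ∈ s, 0 ≤ k x y) {x : α} (hx : x ∈ s) :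
    |kernelOp μ s k g x| ≤ kernelOp μ s k (fun y => |g y|) x := by
  refine abs_integral_le_integral_abs.trans_eq (setIntegral_congr_fun hs fun y hy => ?_)
  simp only [abs_mul, abs_of_nonneg (hk₀ x hx y hy)]

variable [TopologicalSpace α]

def HasPosEigenfunction (μ : Measure α) (s : Set α) (k : α → α → ℝ) (r : ℝ) : Prop :=
  ∃ φ : α → ℝ, ContinuousOn φ s ∧ (∀ x ∈ s, 0 < φ x) ∧
    ∀ x ∈ s, kernelOp μ s k φ x = r * φ x

theorem hasPosEigenfunction_one_sub_iff {lam : ℝ} :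
    HasPosEigenfunction μ s k (1 - lam) ↔
      ∃ φ : α → ℝ, ContinuousOn φ s ∧ (∀ x ∈ s, 0 < φ x) ∧
        ∀ x ∈ s, φ x - ∫ y in s, k x y * φ y ∂μ = lam * φ x :=
  exists_congr fun _ => and_congr_right fun _ => and_congr_right fun _ =>
    forall₂_congr fun _ _ => by rw [kernelOp]; constructor <;> intro h <;> linarith

theorem HasPosEigenfunction.of_conj {k' : α → α → ℝ} {w : α → ℝ} {r : ℝ}
    (hs : MeasurableSet s) (hw : ContinuousOn w s) (hwpos : ∀ x ∈ s, 0 < w x)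
    (hkk' : ∀ x ∈ s, ∀ y ∈ s, k' x y * w x = k x y * w y) (h : HasPosEigenfunction μ s k r) :
    HasPosEigenfunction μ s k' r := by
  obtain ⟨φ, hφ, hφpos, hφeq⟩ := h
  refine ⟨fun x => φ x / w x, hφ.div hw fun x hx => (hwpos x hx).ne',
    fun x hx => div_pos (hφpos x hx) (hwpos x hx), fun x hx => ?_⟩
  calc kernelOp μ s k' (fun x => φ x / w x) x = ∫ y in s, k x y * φ y / w x ∂μ := by
        refine setIntegral_congr_fun hs fun y hy => ?_
        have := (hwpos x hx).ne'
        have := (hwpos y hy).ne'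
        field_simp
        linear_combination φ y * hkk' x hx y hy
    _ = r * (φ x / w x) := by
        rw [integral_div]
        exact (congrArg (· / w x) (hφeq x hx)).trans (mul_div_assoc _ _ _)

theorem hasPosEigenfunction_iff_of_conj {k' : α → α → ℝ} {w : α → ℝ} {r : ℝ}
    (hs : MeasurableSet s) (hw : ContinuousOn w s) (hwpos : ∀ x ∈ s, 0 < w x)
    (hkk' : ∀ x ∈ s, ∀ y ∈ s, k' x y * w x = k x y * w y) :
    HasPosEigenfunction μ s k' r ↔ HasPosEigenfunction μ s k r := by
  refine ⟨.of_conj (w := fun x => (w x)⁻¹) hs (hw.inv₀ fun x hx => (hwpos x hx).ne')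
    (fun x hx => inv_pos.2 (hwpos x hx)) fun x hx y hy => ?_, .of_conj hs hw hwpos hkk'⟩
  have := (hwpos x hx).ne'
  have := (hwpos y hy).ne'
  field_simp
  linear_combination (hkk' x hx y hy).symm

variable [T2Space α] [OpensMeasurableSpace α] [IsFiniteMeasureOnCompacts μ]

theorem setIntegral_pos_of_continuousOn (hs : IsCompact s) (hμs : μ s ≠ 0)
    (hf : ContinuousOn f s) (hpos : ∀ x ∈ s, 0 < f x) : 0 < ∫ x in s, f x ∂μ := by
  rw [setIntegral_pos_iff_support_of_nonneg_ae
    ((ae_restrict_mem hs.measurableSet).mono fun x hx => (hpos x hx).le)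
    (hf.integrableOn_compact hs)]
  have hsupp : support f ∩ s = s := inter_eq_right.2 fun x hx => (hpos x hx).ne'
  rwa [hsupp, pos_iff_ne_zero]

theorem TendstoUniformlyOn.tendsto_setIntegral_mul {F : ℕ → α → ℝ} (hs : IsCompact s)
    (hh : ContinuousOn h s) (hF : ∀ n, ContinuousOn (F n) s)
    (hlim : TendstoUniformlyOn F f atTop s) :
    Tendsto (fun n => ∫ x in s, h x * F n x ∂μ) atTop (𝓝 (∫ x in s, h x * f x ∂μ)) := by
  obtain ⟨Ch, hCh⟩ := hs.exists_bound_of_continuousOn hh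
  obtain ⟨Cf, hCf⟩ := hs.exists_bound_of_continuousOn
    (hlim.continuousOn (Frequently.of_forall hF))
  refine tendsto_integral_filter_of_dominated_convergence (fun _ => Ch * (Cf + 1))
    (Eventually.of_forall fun n => (hh.mul (hF n)).aestronglyMeasurable hs.measurableSet) ?_
    (integrableOn_const hs.measure_ne_top) ?_
  · have hbd := (uniformContinuous_norm.comp_tendstoUniformlyOn hlim).eventually_forall_le
      (lt_add_one Cf) hCf
    filter_upwards [hbd] with n hn
    filter_upwards [ae_restrict_mem hs.measurableSet] with x hx
    rw [norm_mul]
    exact mul_le_mul (hCh x hx) (hn x hx) (norm_nonneg _) ((norm_nonneg _).trans (hCh x hx))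
  · filter_upwards [ae_restrict_mem hs.measurableSet] with x hx
    exact (hlim.tendsto_at hx).const_mul (h x)

section Kernel

variable {r c C : ℝ} (hs : IsCompact s) (hk : ContinuousOn (uncurry k) (s ×ˢ s))
include hs hk

theorem integrableOn_kernel_mul (hg : ContinuousOn g s) {x : α} (hx : x ∈ s) :
    IntegrableOn (fun y => k x y * g y) s μ :=
  ((hk.uncurry_left x hx).mul hg).integrableOn_compact hs

theorem continuousOn_kernelOp [FirstCountableTopology α] (hg : ContinuousOn g s) :
    ContinuousOn (kernelOp μ s k g) s := by
  have hF : ContinuousOn (fun q : α × α => k q.1 q.2 * g q.2) (s ×ˢ s) :=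
    hk.mul (hg.comp continuousOn_snd fun q hq => hq.2)
  obtain ⟨M, hM⟩ := (hs.prod hs).exists_bound_of_continuousOn hF
  refine continuousOn_of_dominated (bound := fun _ => M)
    (fun x hx => ((hk.uncurry_left x hx).mul hg).aestronglyMeasurable hs.measurableSet)
    (fun x hx => ?_) (integrableOn_const hs.measure_ne_top) ?_
  · filter_upwards [ae_restrict_mem hs.measurableSet] with y hy
    exact hM (x, y) ⟨hx, hy⟩
  · filter_upwards [ae_restrict_mem hs.measurableSet] with y hy
    exact (hk.uncurry_right y hy).mul continuousOn_const

theorem kernelOp_sub (hf : ContinuousOn f s) (hg : ContinuousOn g s) {x : α} (hx : x ∈ s) :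
    kernelOp μ s k (f - g) x = kernelOp μ s k f x - kernelOp μ s k g x := by
  simp only [kernelOp, Pi.sub_apply, mul_sub]
  exact integral_sub (integrableOn_kernel_mul hs hk hf hx) (integrableOn_kernel_mul hs hk hg hx)

theorem abs_kernelOp_le (hk₀ : ∀ x ∈ s, ∀ y ∈ s, 0 ≤ k x y)
    (hC : ∀ x ∈ s, ∀ y ∈ s, k x y ≤ C * φ y) (hφ : ContinuousOn φ s)
    (hg : ContinuousOn g s) {x : α} (hx : x ∈ s) :
    |kernelOp μ s k g x| ≤ C * ∫ y in s, |g y| * φ y ∂μ := by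
  refine (abs_kernelOp_le_kernelOp_abs hs.measurableSet hk₀ hx).trans ?_
  rw [← integral_const_mul]
  refine setIntegral_mono_on (integrableOn_kernel_mul hs hk hg.abs hx)
    ((continuousOn_const.mul (hg.abs.mul hφ)).integrableOn_compact hs) hs.measurableSet
    fun y hy => ?_
  calc k x y * |g y| ≤ C * φ y * |g y| :=
        mul_le_mul_of_nonneg_right (hC x hx y hy) (abs_nonneg _)
    _ = C * (|g y| * φ y) := by ring

theorem mul_integral_le_kernelOp (hc : ∀ x ∈ s, ∀ y ∈ s, c * φ y ≤ k x y)
    (hφ : ContinuousOn φ s) (hg : ContinuousOn g s) (hg₀ : ∀ y ∈ s, 0 ≤ g y)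
    {x : α} (hx : x ∈ s) :
    c * ∫ y in s, g y * φ y ∂μ ≤ kernelOp μ s k g x := by
  rw [← integral_const_mul]
  refine setIntegral_mono_on ((continuousOn_const.mul (hg.mul hφ)).integrableOn_compact hs)
    (integrableOn_kernel_mul hs hk hg hx) hs.measurableSet fun y hy => ?_
  calc c * (g y * φ y) = c * φ y * g y := by ring
    _ ≤ k x y * g y := mul_le_mul_of_nonneg_right (hc x hx y hy) (hg₀ y hy)

theorem mul_integral_le_eigenvalue (hφ : ContinuousOn φ s)
    (hφeq : ∀ y ∈ s, kernelOp μ s (swap k) φ y = r * φ y)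
    (hc : ∀ x ∈ s, ∀ y ∈ s, c * φ y ≤ k x y) (hφpos : ∀ x ∈ s, 0 < φ x) (hne : s.Nonempty) :
    c * ∫ x in s, φ x ∂μ ≤ r := by
  obtain ⟨y, hy⟩ := hne
  have h : ∫ x in s, c * φ y * φ x ∂μ ≤ kernelOp μ s (swap k) φ y :=
    setIntegral_mono_on ((continuousOn_const.mul hφ).integrableOn_compact hs)
      (integrableOn_kernel_mul hs hk.uncurry_swap hφ hy) hs.measurableSet
      fun x hx => mul_le_mul_of_nonneg_right (hc x hx y hy) (hφpos x hx).le
  rw [integral_const_mul, hφeq y hy, mul_right_comm] at h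
  exact le_of_mul_le_mul_right h (hφpos y hy)

theorem HasPosEigenfunction.pos (hμs : μ s ≠ 0) (hkpos : ∀ x ∈ s, ∀ y ∈ s, 0 < k x y)
    (h : HasPosEigenfunction μ s k r) : 0 < r := by
  obtain ⟨φ, hφ, hφpos, hφeq⟩ := h
  obtain ⟨x, hx⟩ := nonempty_of_measure_ne_zero hμs
  refine pos_of_mul_pos_left ?_ (hφpos x hx).le
  rw [← hφeq x hx]
  exact setIntegral_pos_of_continuousOn hs hμs ((hk.uncurry_left x hx).mul hφ) fun y hy =>
    mul_pos (hkpos x hx y hy) (hφpos y hy)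

theorem integral_kernelOp_mul [SecondCountableTopology α] [SFinite μ] (hg : ContinuousOn g s)
    (hh : ContinuousOn h s) :
    ∫ x in s, kernelOp μ s k g x * h x ∂μ = ∫ y in s, g y * kernelOp μ s (swap k) h y ∂μ := by
  have hF : ContinuousOn (fun q : α × α => k q.1 q.2 * g q.2 * h q.1) (s ×ˢ s) :=
    (hk.mul (hg.comp continuousOn_snd fun q hq => hq.2)).mul
      (hh.comp continuousOn_fst fun q hq => hq.1)
  have hint : Integrable (uncurry fun x y => k x y * g y * h x)
      ((μ.restrict s).prod (μ.restrict s)) := by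
    rw [Measure.prod_restrict]
    exact hF.integrableOn_compact (hs.prod hs)
  calc ∫ x in s, kernelOp μ s k g x * h x ∂μ
      = ∫ x in s, ∫ y in s, k x y * g y * h x ∂μ ∂μ := by
        simp only [kernelOp, ← integral_mul_const]
    _ = ∫ y in s, ∫ x in s, k x y * g y * h x ∂μ ∂μ := integral_integral_swap hint
    _ = ∫ y in s, g y * kernelOp μ s (swap k) h y ∂μ := by
        simp only [kernelOp, swap, ← integral_const_mul]
        congr 1 with y
        congr 1 with x
        ring

variable [SecondCountableTopology α] [SFinite μ] (hφ : ContinuousOn φ s)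
  (hφeq : ∀ y ∈ s, kernelOp μ s (swap k) φ y = r * φ y)
include hφ hφeq

theorem integral_kernelOp_mul_eigenfunction (hg : ContinuousOn g s) :
    ∫ x in s, kernelOp μ s k g x * φ x ∂μ = r * ∫ x in s, g x * φ x ∂μ := by
  rw [integral_kernelOp_mul hs hk hg hφ, ← integral_const_mul]
  refine setIntegral_congr_fun hs.measurableSet fun y hy => ?_
  rw [hφeq y hy]
  ring

theorem integral_abs_kernelOp_mul_le (hφ₀ : ∀ x ∈ s, 0 ≤ φ x)
    (hc : ∀ x ∈ s, ∀ y ∈ s, c * φ y ≤ k x y) (hg : ContinuousOn g s)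
    (hgφ : ∫ x in s, g x * φ x ∂μ = 0) :
    ∫ x in s, |kernelOp μ s k g x| * φ x ∂μ
      ≤ (r - c * ∫ x in s, φ x ∂μ) * ∫ x in s, |g x| * φ x ∂μ := by
  set k' : α → α → ℝ := fun x y => k x y - c * φ y
  have hk' : ContinuousOn (uncurry k') (s ×ˢ s) :=
    hk.sub (continuousOn_const.mul (hφ.comp continuousOn_snd fun _ hq => hq.2))
  -- Since `∫ g φ = 0`, lowering the kernel by `c φ(y)` does not change `K g`, and what remains
  -- of the kernel is nonnegative.
  have hkernel_eq : ∀ x ∈ s, kernelOp μ s k g x = kernelOp μ s k' g x := by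
    intro x hx
    have hgφ_int : IntegrableOn (fun y => g y * φ y) s μ := (hg.mul hφ).integrableOn_compact hs
    have h (y : α) : (k x y - c * φ y) * g y = k x y * g y - c * (g y * φ y) := by ring
    simp only [kernelOp, k', h]
    rw [integral_sub (integrableOn_kernel_mul hs hk hg hx) (hgφ_int.const_mul c),
      integral_const_mul, hgφ, mul_zero, sub_zero]
  have hadjoint_eq :
      ∀ y ∈ s, kernelOp μ s (swap k') φ y = (r - c * ∫ x in s, φ x ∂μ) * φ y := by
    intro y hy
    have h := hφeq y hy
    have hcφ : IntegrableOn (fun x => c * φ y * φ x) s μ :=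
      (continuousOn_const.mul hφ).integrableOn_compact hs
    simp only [kernelOp, swap, k', sub_mul] at h ⊢
    rw [integral_sub (integrableOn_kernel_mul hs hk.uncurry_swap hφ hy) hcφ,
      integral_const_mul, h]
    ring
  calc ∫ x in s, |kernelOp μ s k g x| * φ x ∂μ
      ≤ ∫ x in s, kernelOp μ s k' (fun y => |g y|) x * φ x ∂μ := by
        refine setIntegral_mono_on
          (((continuousOn_kernelOp hs hk hg).abs.mul hφ).integrableOn_compact hs)
          (((continuousOn_kernelOp hs hk' hg.abs).mul hφ).integrableOn_compact hs)
          hs.measurableSet fun x hx => mul_le_mul_of_nonneg_right ?_ (hφ₀ x hx)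
        rw [hkernel_eq x hx]
        exact abs_kernelOp_le_kernelOp_abs hs.measurableSet
          (fun x hx y hy => sub_nonneg.2 (hc x hx y hy)) hx
    _ = ∫ y in s, |g y| * kernelOp μ s (swap k') φ y ∂μ :=
        integral_kernelOp_mul hs hk' hg.abs hφ
    _ = (r - c * ∫ x in s, φ x ∂μ) * ∫ x in s, |g x| * φ x ∂μ := by
        rw [← integral_const_mul]
        refine setIntegral_congr_fun hs.measurableSet fun y hy => ?_
        rw [hadjoint_eq y hy]
        ring

section Iteration

variable {v : ℕ → α → ℝ} (hr : 0 < r) (hv : ∀ n, ContinuousOn (v n) s)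
  (hvs : ∀ n, ∀ x ∈ s, v (n + 1) x = r⁻¹ * kernelOp μ s k (v n) x)
include hr hv hvs

theorem integral_iterate_mul_eigenfunction (n : ℕ) :
    ∫ x in s, v n x * φ x ∂μ = ∫ x in s, v 0 x * φ x ∂μ := by
  induction n with
  | zero => rfl
  | succ n ih =>
    calc ∫ x in s, v (n + 1) x * φ x ∂μ
          = ∫ x in s, r⁻¹ * (kernelOp μ s k (v n) x * φ x) ∂μ :=
          setIntegral_congr_fun hs.measurableSet fun x hx => by rw [hvs n x hx, mul_assoc]
      _ = ∫ x in s, v 0 x * φ x ∂μ := by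
          rw [integral_const_mul, integral_kernelOp_mul_eigenfunction hs hk hφ hφeq (hv n),
            inv_mul_cancel_left₀ hr.ne', ih]

theorem integral_abs_sub_iterate_mul_le (hφ₀ : ∀ x ∈ s, 0 ≤ φ x)
    (hc : ∀ x ∈ s, ∀ y ∈ s, c * φ y ≤ k x y) (hcr : c * ∫ x in s, φ x ∂μ ≤ r) (n : ℕ) :
    ∫ x in s, |v (n + 1) x - v n x| * φ x ∂μ
      ≤ (1 - c * (∫ x in s, φ x ∂μ) / r) ^ n * ∫ x in s, |v 1 x - v 0 x| * φ x ∂μ := by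
  have hθ : 1 - c * (∫ x in s, φ x ∂μ) / r = r⁻¹ * (r - c * ∫ x in s, φ x ∂μ) := by
    field_simp
  set θ := 1 - c * (∫ x in s, φ x ∂μ) / r
  have hvφ (m : ℕ) : IntegrableOn (fun x => v m x * φ x) s μ :=
    ((hv m).mul hφ).integrableOn_compact hs
  induction n with
  | zero => simp
  | succ n ih =>
    have hd : ContinuousOn (v (n + 1) - v n) s := (hv (n + 1)).sub (hv n)
    have hdφ : ∫ x in s, (v (n + 1) - v n) x * φ x ∂μ = 0 := by
      simp only [Pi.sub_apply, sub_mul]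
      rw [integral_sub (hvφ _) (hvφ _),
        integral_iterate_mul_eigenfunction hs hk hφ hφeq hr hv hvs,
        integral_iterate_mul_eigenfunction hs hk hφ hφeq hr hv hvs n, sub_self]
    calc ∫ x in s, |v (n + 1 + 1) x - v (n + 1) x| * φ x ∂μ
        = r⁻¹ * ∫ x in s, |kernelOp μ s k (v (n + 1) - v n) x| * φ x ∂μ := by
          rw [← integral_const_mul]
          refine setIntegral_congr_fun hs.measurableSet fun x hx => ?_
          rw [hvs _ x hx, hvs _ x hx, kernelOp_sub hs hk (hv _) (hv _) hx, ← mul_sub, abs_mul,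
            abs_of_pos (inv_pos.2 hr), mul_assoc]
      _ ≤ r⁻¹ * ((r - c * ∫ x in s, φ x ∂μ) *
            ∫ x in s, |v (n + 1) x - v n x| * φ x ∂μ) :=
          mul_le_mul_of_nonneg_left
            (integral_abs_kernelOp_mul_le hs hk hφ hφeq hφ₀ hc hd hdφ) (inv_pos.2 hr).le
      _ ≤ θ * (θ ^ n * ∫ x in s, |v 1 x - v 0 x| * φ x ∂μ) := by
          rw [← mul_assoc, ← hθ]
          refine mul_le_mul_of_nonneg_left ih ?_
          rw [hθ]
          exact mul_nonneg (inv_pos.2 hr).le (sub_nonneg.2 hcr)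
      _ = θ ^ (n + 1) * ∫ x in s, |v 1 x - v 0 x| * φ x ∂μ := by ring

theorem dist_iterate_le_geometric (hφ₀ : ∀ x ∈ s, 0 ≤ φ x)
    (hc : ∀ x ∈ s, ∀ y ∈ s, c * φ y ≤ k x y) (hC : ∀ x ∈ s, ∀ y ∈ s, k x y ≤ C * φ y)
    (hcr : c * ∫ x in s, φ x ∂μ ≤ r) (hc₀ : 0 ≤ c) (hC₀ : 0 ≤ C) (n : ℕ) {x : α} (hx : x ∈ s) :
    dist (v (n + 1) x) (v (n + 1 + 1) x) ≤ r⁻¹ * C * (∫ x in s, |v 1 x - v 0 x| * φ x ∂μ)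
      * (1 - c * (∫ x in s, φ x ∂μ) / r) ^ n := by
  have hk₀ : ∀ x ∈ s, ∀ y ∈ s, 0 ≤ k x y := fun x hx y hy =>
    (mul_nonneg hc₀ (hφ₀ y hy)).trans (hc x hx y hy)
  rw [dist_comm, Real.dist_eq, hvs _ x hx, hvs _ x hx, ← mul_sub,
    ← kernelOp_sub hs hk (hv _) (hv _) hx, abs_mul, abs_of_pos (inv_pos.2 hr), mul_assoc,
    mul_assoc]
  refine mul_le_mul_of_nonneg_left ?_ (inv_pos.2 hr).le
  calc |kernelOp μ s k (v (n + 1) - v n) x|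
      ≤ C * ∫ y in s, |(v (n + 1) - v n) y| * φ y ∂μ :=
        abs_kernelOp_le hs hk hk₀ hC hφ ((hv _).sub (hv _)) hx
    _ ≤ C * ((∫ x in s, |v 1 x - v 0 x| * φ x ∂μ) *
          (1 - c * (∫ x in s, φ x ∂μ) / r) ^ n) := by
        rw [mul_comm (∫ x in s, |v 1 x - v 0 x| * φ x ∂μ)]
        exact mul_le_mul_of_nonneg_left
          (integral_abs_sub_iterate_mul_le hs hk hφ hφeq hr hv hvs hφ₀ hc hcr n) hC₀

theorem exists_tendstoUniformlyOn_iterate (hμs : μ s ≠ 0) (hφpos : ∀ x ∈ s, 0 < φ x)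
    (hc₀ : 0 < c) (hC₀ : 0 ≤ C) (hc : ∀ x ∈ s, ∀ y ∈ s, c * φ y ≤ k x y)
    (hC : ∀ x ∈ s, ∀ y ∈ s, k x y ≤ C * φ y) :
    ∃ ψ : α → ℝ, TendstoUniformlyOn (fun n => v (n + 1)) ψ atTop s := by
  have hcr :=
    mul_integral_le_eigenvalue hs hk hφ hφeq hc hφpos (nonempty_of_measure_ne_zero hμs)
  have hP : 0 < ∫ x in s, φ x ∂μ := setIntegral_pos_of_continuousOn hs hμs hφ hφpos
  exact exists_tendstoUniformlyOn_of_dist_le_geometric (sub_nonneg.2 ((div_le_one hr).2 hcr))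
    (sub_lt_self _ (div_pos (mul_pos hc₀ hP) hr)) fun n x hx =>
    dist_iterate_le_geometric hs hk hφ hφeq hr hv hvs (fun x hx => (hφpos x hx).le) hc hC hcr
      hc₀.le hC₀ n hx

end Iteration

end Kernel

theorem HasPosEigenfunction.of_swap [SecondCountableTopology α] [SFinite μ] {r : ℝ}
    (hs : IsCompact s) (hμs : μ s ≠ 0) (hk : ContinuousOn (uncurry k) (s ×ˢ s))
    (hkpos : ∀ x ∈ s, ∀ y ∈ s, 0 < k x y) (h : HasPosEigenfunction μ s (swap k) r) :
    HasPosEigenfunction μ s k r := by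
  obtain ⟨φ, hφ, hφpos, hφeq⟩ := h
  obtain ⟨c, C, hc₀, hC₀, hcC⟩ := exists_mul_le_kernel_le_mul hs hk hkpos hφ hφpos
  have hr : 0 < r := HasPosEigenfunction.pos hs hk.uncurry_swap hμs
    (fun x hx y hy => hkpos y hy x hx) ⟨φ, hφ, hφpos, hφeq⟩
  set u : ℕ → α → ℝ := fun n => (fun g x => r⁻¹ * kernelOp μ s k g x)^[n] 1 with hu_def
  have hus (n : ℕ) (x : α) : u (n + 1) x = r⁻¹ * kernelOp μ s k (u n) x := by
    simp only [hu_def, iterate_succ_apply']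
  have hu (n : ℕ) : ContinuousOn (u n) s ∧ ∀ x ∈ s, 0 ≤ u n x := by
    induction n with
    | zero => exact ⟨continuousOn_const, fun _ _ => zero_le_one⟩
    | succ n ih =>
      refine ⟨(continuousOn_const.mul (continuousOn_kernelOp hs hk ih.1)).congr
        fun x _ => hus n x, fun x hx => ?_⟩
      rw [hus]
      exact mul_nonneg (inv_pos.2 hr).le (setIntegral_nonneg hs.measurableSet
        fun y hy => mul_nonneg (hkpos x hx y hy).le (ih.2 y hy))
  obtain ⟨ψ, hψ⟩ := exists_tendstoUniformlyOn_iterate hs hk hφ hφeq hr (fun n => (hu n).1)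
    (fun n x _ => hus n x) hμs hφpos hc₀ hC₀.le (fun x hx y hy => (hcC x hx y hy).1)
    (fun x hx y hy => (hcC x hx y hy).2)
  refine ⟨ψ, hψ.continuousOn (Frequently.of_forall fun n => (hu (n + 1)).1),
    fun x hx => ?_, fun x hx => ?_⟩
  · -- The iteration preserves the pairing with `φ`, which bounds every iterate from below.
    have hlow (n : ℕ) : r⁻¹ * (c * ∫ y in s, φ y ∂μ) ≤ u (n + 1) x := by
      have h := mul_integral_le_kernelOp (μ := μ) hs hk (fun x hx y hy => (hcC x hx y hy).1) hφ
        (hu n).1 (hu n).2 hx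
      rw [integral_iterate_mul_eigenfunction hs hk hφ hφeq hr (fun n => (hu n).1)
        (fun n x _ => hus n x)] at h
      simp only [hu_def, iterate_zero, id, Pi.one_apply, one_mul] at h
      rw [hus]
      exact mul_le_mul_of_nonneg_left h (inv_pos.2 hr).le
    have hP : 0 < ∫ y in s, φ y ∂μ := setIntegral_pos_of_continuousOn hs hμs hφ hφpos
    exact (mul_pos (inv_pos.2 hr) (mul_pos hc₀ hP)).trans_le
      (ge_of_tendsto (hψ.tendsto_at hx) (Eventually.of_forall hlow))
  · have hlim : Tendsto (fun n => kernelOp μ s k (u (n + 1)) x) atTop (𝓝 (r * ψ x)) := by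
      refine (((hψ.tendsto_at hx).comp (tendsto_add_atTop_nat 1)).const_mul r).congr fun n => ?_
      simp only [comp_apply, hus (n + 1), mul_inv_cancel_left₀ hr.ne']
    exact tendsto_nhds_unique
      (hψ.tendsto_setIntegral_mul hs (hk.uncurry_left x hx) fun n => (hu (n + 1)).1) hlim

theorem hasPosEigenfunction_swap_iff [SecondCountableTopology α] [SFinite μ] {r : ℝ}
    (hs : IsCompact s) (hμs : μ s ≠ 0) (hk : ContinuousOn (uncurry k) (s ×ˢ s))
    (hkpos : ∀ x ∈ s, ∀ y ∈ s, 0 < k x y) :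
    HasPosEigenfunction μ s (swap k) r ↔ HasPosEigenfunction μ s k r :=
  ⟨.of_swap hs hμs hk hkpos, .of_swap hs hμs hk.uncurry_swap fun x hx y hy => hkpos y hy x hx⟩

/-- The operator `L : φ ↦ φ − ∫ β(·,y) S(y)/μ(y) φ(y) dy` and its formal adjoint
`L* : φ ↦ φ − ∫ β(y,·) S(y)/μ(y) φ(y) dy` have the same eigenvalue with positive
continuous eigenfunction. -/
theorem stmt13 (A : ℝ) (hA : 0 < A) (β : ℝ → ℝ → ℝ) (μ S : ℝ → ℝ) (lam : ℝ)
    (hβc : ContinuousOn (fun q : ℝ × ℝ => β q.1 q.2) (Set.Icc 0 A ×ˢ Set.Icc 0 A))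
    (hβpos : ∀ x ∈ Set.Icc (0:ℝ) A, ∀ y ∈ Set.Icc (0:ℝ) A, 0 < β x y)
    (hμc : ContinuousOn μ (Set.Icc 0 A)) (hμpos : ∀ x ∈ Set.Icc (0:ℝ) A, 0 < μ x)
    (hSc : ContinuousOn S (Set.Icc 0 A)) (hSpos : ∀ x ∈ Set.Icc (0:ℝ) A, 0 < S x) :
    (∃ φ : ℝ → ℝ, ContinuousOn φ (Set.Icc 0 A) ∧ (∀ x ∈ Set.Icc (0:ℝ) A, 0 < φ x) ∧
      ∀ x ∈ Set.Icc (0:ℝ) A,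
        φ x - (∫ y in Set.Icc (0:ℝ) A, β x y * S y / μ y * φ y) = lam * φ x) ↔
    (∃ ψ : ℝ → ℝ, ContinuousOn ψ (Set.Icc 0 A) ∧ (∀ x ∈ Set.Icc (0:ℝ) A, 0 < ψ x) ∧
      ∀ x ∈ Set.Icc (0:ℝ) A,
        ψ x - (∫ y in Set.Icc (0:ℝ) A, β y x * S y / μ y * ψ y) = lam * ψ x) := by
  have hμs : volume (Icc 0 A) ≠ 0 := by simpa [Real.volume_Icc] using hA
  have hk : ContinuousOn (uncurry fun x y => β x y * S y / μ y) (Icc 0 A ×ˢ Icc 0 A) :=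
    (hβc.mul (hSc.comp continuousOn_snd fun _ hq => hq.2)).div
      (hμc.comp continuousOn_snd fun _ hq => hq.2) fun _ hq => (hμpos _ hq.2).ne'
  rw [← hasPosEigenfunction_one_sub_iff (k := fun x y => β x y * S y / μ y),
    ← hasPosEigenfunction_one_sub_iff (k := fun x y => β y x * S y / μ y),
    ← hasPosEigenfunction_swap_iff isCompact_Icc hμs hk fun x hx y hy =>
      div_pos (mul_pos (hβpos x hx y hy) (hSpos y hy)) (hμpos y hy)]
  exact (hasPosEigenfunction_iff_of_conj (w := fun x => S x / μ x) measurableSet_Icc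
    (hSc.div hμc fun x hx => (hμpos x hx).ne') (fun x hx => div_pos (hSpos x hx) (hμpos x hx))
    fun x _ y _ => by simp only [swap]; ring).symm
end

section
/- Optimality of threshold vaccination among strategies of fixed mass (reduced scalar form): let a = ∫_X S₀ > 0, η ∈ (0,1), and suppose for each admissible v (0 ≤ v ≤ S₀, ∫ v = m) the survivor count is N(v) = m + (a − m) e^{σ_∞(v) − σ₀(v)} η where σ_∞(v) ∈ [0,1) is the unique solution of σ e^{−σ} = σ₀(v) e^{−σ₀(v)} η, σ₀(v) = ∫ (β/μ)(S₀ − v) and σ₀(v) > 1 for all admissible v. Then any v* minimizing σ₀ among admissible v with ∫ v = m maximizes N: if σ₀(v*) ≤ σ₀(v) for all such v, then N(v*) ≥ N(v) for all such v. -/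
/-!
Write `f s = s * exp (-s)`; it increases on `(-∞, 1]` and decreases on `[1, ∞)`. The final-size
relation `f σ_∞ = η f σ₀` gives `exp (σ_∞ - σ₀) * η = σ_∞ / σ₀`, so `N = m + (a - m) σ_∞ / σ₀`.
A smaller `σ₀ > 1` has a larger `f σ₀`, hence a larger root `σ_∞ < 1`, so the ratio `σ_∞ / σ₀`
only grows when `σ₀` decreases.
-/

open Real Set

lemma hasDerivAt_mul_exp_neg (s : ℝ) :
    HasDerivAt (fun t : ℝ => t * exp (-t)) ((1 - s) * exp (-s)) s :=
  ((hasDerivAt_id' s).fun_mul (hasDerivAt_neg s).exp).congr_deriv (by ring)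

lemma strictMonoOn_mul_exp_neg : StrictMonoOn (fun s : ℝ => s * exp (-s)) (Iic 1) := by
  refine strictMonoOn_of_deriv_pos (convex_Iic 1) (by fun_prop) fun s hs => ?_
  rw [interior_Iic] at hs
  rw [(hasDerivAt_mul_exp_neg s).deriv]
  exact mul_pos (sub_pos.mpr hs) (exp_pos _)

lemma antitoneOn_mul_exp_neg : AntitoneOn (fun s : ℝ => s * exp (-s)) (Ici 1) := by
  refine antitoneOn_of_deriv_nonpos (convex_Ici 1) (by fun_prop)
    (fun s _ => (hasDerivAt_mul_exp_neg s).differentiableAt.differentiableWithinAt)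
    fun s hs => ?_
  rw [interior_Ici] at hs
  rw [(hasDerivAt_mul_exp_neg s).deriv]
  exact mul_nonpos_of_nonpos_of_nonneg (sub_nonpos.mpr hs.out.le) (exp_pos _).le

lemma exp_sub_mul_eq_div_of_mul_exp_neg_eq {u w η : ℝ} (hw : w ≠ 0)
    (h : u * exp (-u) = w * exp (-w) * η) : exp (u - w) * η = u / w := by
  rw [eq_div_iff hw]
  calc exp (u - w) * η * w = w * exp (-w) * η * exp u := by rw [sub_eq_add_neg, exp_add]; ring
    _ = u := by rw [← h, mul_assoc, ← exp_add, neg_add_cancel, exp_zero, mul_one]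

lemma le_of_mul_exp_neg_eq_of_le {x y s t η : ℝ} (hx : 1 ≤ x) (hxy : x ≤ y) (hs : s ≤ 1)
    (ht : t ≤ 1) (hη : 0 ≤ η) (hsx : s * exp (-s) = x * exp (-x) * η)
    (hty : t * exp (-t) = y * exp (-y) * η) : t ≤ s := by
  have hf : y * exp (-y) ≤ x * exp (-x) :=
    antitoneOn_mul_exp_neg (mem_Ici.mpr hx) (mem_Ici.mpr (hx.trans hxy)) hxy
  refine (strictMonoOn_mul_exp_neg.le_iff_le ht hs).mp ?_
  simp only [hsx, hty]
  exact mul_le_mul_of_nonneg_right hf hη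

theorem stmt16_general {α : Type*} (Adm : α → Prop) (σ₀ σinf N : α → ℝ) (a m η : ℝ)
    (hma : m ≤ a) (hη : η ∈ Set.Ioo (0:ℝ) 1)
    (hσ₀ : ∀ v, Adm v → 1 < σ₀ v)
    (hσinf : ∀ v, Adm v → σinf v ∈ Set.Ico (0:ℝ) 1 ∧
      σinf v * Real.exp (-(σinf v)) = σ₀ v * Real.exp (-(σ₀ v)) * η)
    (hN : ∀ v, Adm v → N v = m + (a - m) * Real.exp (σinf v - σ₀ v) * η)
    (vstar : α) (hstar : Adm vstar)
    (hmin : ∀ v, Adm v → σ₀ vstar ≤ σ₀ v) :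
    ∀ v, Adm v → N v ≤ N vstar := by
  have hN' : ∀ v, Adm v → N v = m + (a - m) * (σinf v / σ₀ v) := fun v hv => by
    rw [hN v hv, mul_assoc, exp_sub_mul_eq_div_of_mul_exp_neg_eq
      (by linarith [hσ₀ v hv]) (hσinf v hv).2]
  intro v hv
  obtain ⟨⟨hs₀, hs₁⟩, hs⟩ := hσinf vstar hstar
  obtain ⟨⟨-, ht₁⟩, ht⟩ := hσinf v hv
  have hts : σinf v ≤ σinf vstar :=
    le_of_mul_exp_neg_eq_of_le (hσ₀ vstar hstar).le (hmin v hv) hs₁.le ht₁.le hη.1.le hs ht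
  have hratio : σinf v / σ₀ v ≤ σinf vstar / σ₀ vstar :=
    div_le_div₀ hs₀ hts (by linarith [hσ₀ vstar hstar]) (hmin v hv)
  rw [hN' v hv, hN' vstar hstar]
  gcongr

/-- Optimality of threshold vaccination among strategies of fixed mass
(reduced scalar form): any minimizer of `σ₀` maximizes the survivor count `N`. -/
theorem stmt16 {α : Type*} (Adm : α → Prop) (σ₀ σinf N : α → ℝ) (a m η : ℝ)
    (ha : 0 < a) (hma : m ≤ a) (hη : η ∈ Set.Ioo (0:ℝ) 1)
    (hσ₀ : ∀ v, Adm v → 1 < σ₀ v)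
    (hσinf : ∀ v, Adm v → σinf v ∈ Set.Ico (0:ℝ) 1 ∧
      σinf v * Real.exp (-(σinf v)) = σ₀ v * Real.exp (-(σ₀ v)) * η)
    (hN : ∀ v, Adm v → N v = m + (a - m) * Real.exp (σinf v - σ₀ v) * η)
    (vstar : α) (hstar : Adm vstar)
    (hmin : ∀ v, Adm v → σ₀ vstar ≤ σ₀ v) :
    ∀ v, Adm v → N v ≤ N vstar :=
  stmt16_general Adm σ₀ σinf N a m η hma hη hσ₀ hσinf hN vstar hstar hmin
end

section
/- Monotonicity in total vaccine budget for threshold strategies (reduced form): let a = ∫_X S₀, η ∈ (0,1), and for m in [0,K] let v_m = S₀·1_{w > s_m} with w = β/μ and s_m chosen so ∫_{w>s_m} S₀ = m (level sets of w have measure zero). Assume σ₀(v_m) = ∫ w (S₀ − v_m) > 1 for all m ∈ [0,K], and let σ_∞(v_m) ∈ [0,1) solve σ e^{−σ} = σ₀(v_m) e^{−σ₀(v_m)} η. Define N(m) = m + ∫_C S₀ e^{σ_∞(v_m) − σ₀(v_m)} η where C = {w ≤ s_m}. Then m ↦ N(m) is nondecreasing on [0,K]. -/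
open MeasureTheory Real Set

/-!
With `a = ∫ S₀`, the mass condition makes the untreated mass `∫_C S₀` equal to `a - m`, so
`N m = m + (a - m) E(m) η` with `E = exp (σ_∞ - σ₀) ≤ 1`. A larger budget lowers the threshold
`s_m`, hence lowers `σ₀ = ∫_{w ≤ s_m} w S₀`; as `x e^{-x}` decreases on `[1, ∞)` and increases on
`(-∞, 1]`, the root `σ_∞` rises, so `E` rises. Then
`N m₂ - N m₁ = (m₂ - m₁)(1 - E₁ η) + (a - m₂) η (E₂ - E₁) ≥ 0`.
-/

namespace Real

lemma hasDerivAt_mul_exp_neg (x : ℝ) :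
    HasDerivAt (fun x => x * exp (-x)) ((1 - x) * exp (-x)) x :=
  ((hasDerivAt_id' x).mul (hasDerivAt_neg x).exp).congr_deriv (by ring)

lemma continuous_mul_exp_neg : Continuous fun x : ℝ => x * exp (-x) := by fun_prop

lemma strictMonoOn_mul_exp_neg : StrictMonoOn (fun x : ℝ => x * exp (-x)) (Iic 1) := by
  refine strictMonoOn_of_hasDerivWithinAt_pos (convex_Iic 1) continuous_mul_exp_neg.continuousOn
    (fun x _ => (hasDerivAt_mul_exp_neg x).hasDerivWithinAt) fun x hx => ?_
  rw [interior_Iic, mem_Iio] at hx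
  have : 0 < 1 - x := by linarith
  positivity

lemma antitoneOn_mul_exp_neg : AntitoneOn (fun x : ℝ => x * exp (-x)) (Ici 1) := by
  refine antitoneOn_of_hasDerivWithinAt_nonpos (convex_Ici 1) continuous_mul_exp_neg.continuousOn
    (fun x _ => (hasDerivAt_mul_exp_neg x).hasDerivWithinAt) fun x hx => ?_
  rw [interior_Ici, mem_Ioi] at hx
  exact mul_nonpos_of_nonpos_of_nonneg (by linarith) (exp_pos _).le

lemma sub_le_sub_of_mul_exp_neg_eq {η σ₀ σ₀' σ σ' : ℝ} (hη : 0 ≤ η) (hσ₀' : 1 ≤ σ₀')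
    (hσ₀ : σ₀' ≤ σ₀) (hσ : σ ≤ 1) (hσ' : σ' ≤ 1)
    (h : σ * exp (-σ) = σ₀ * exp (-σ₀) * η) (h' : σ' * exp (-σ') = σ₀' * exp (-σ₀') * η) :
    σ - σ₀ ≤ σ' - σ₀' := by
  have hσ₀_le : σ₀ * exp (-σ₀) ≤ σ₀' * exp (-σ₀') :=
    antitoneOn_mul_exp_neg (mem_Ici.2 hσ₀') (mem_Ici.2 (hσ₀'.trans hσ₀)) hσ₀
  have : σ ≤ σ' := by
    refine (strictMonoOn_mul_exp_neg.le_iff_le (mem_Iic.2 hσ) (mem_Iic.2 hσ')).1 ?_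
    rw [h, h']
    exact mul_le_mul_of_nonneg_right hσ₀_le hη
  linarith

end Real

namespace MeasureTheory

variable {α : Type*} [MeasurableSpace α] {μ : Measure α} {S : Set α} {f w : α → ℝ}

lemma setIntegral_sublevel_add_superlevel (hw : Measurable w) (hf : IntegrableOn f S μ) (c : ℝ) :
    ∫ x in {x ∈ S | w x ≤ c}, f x ∂μ + ∫ x in {x ∈ S | c < w x}, f x ∂μ = ∫ x in S, f x ∂μ := by
  have hsdiff : S \ {x | w x ≤ c} = {x ∈ S | c < w x} := by ext; simp
  rw [← integral_inter_add_sdiff (measurableSet_le hw measurable_const) hf, hsdiff]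
  rfl

lemma monotone_setIntegral_sublevel (hS : MeasurableSet S) (hf : IntegrableOn f S μ)
    (hf₀ : ∀ x ∈ S, 0 ≤ f x) : Monotone fun c => ∫ x in {x ∈ S | w x ≤ c}, f x ∂μ :=
  fun _ _ hab => setIntegral_mono_set (hf.mono_set (sep_subset _ _))
    (ae_restrict_of_ae_restrict_of_subset (sep_subset _ _) (ae_restrict_of_forall_mem hS hf₀))
    (LE.le.eventuallyLE fun _ hx => ⟨hx.1, hx.2.trans hab⟩)

end MeasureTheory

theorem stmt19_general (A K η : ℝ) (hη : η ∈ Set.Ioo (0:ℝ) 1)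
    (S₀ w s σ₀ σinf N : ℝ → ℝ)
    (hS₀c : ContinuousOn S₀ (Set.Icc 0 A))
    (hS₀pos : ∀ x ∈ Set.Icc (0:ℝ) A, 0 < S₀ x)
    (hwm : Measurable w) (hwpos : ∀ x ∈ Set.Icc (0:ℝ) A, 0 < w x)
    (hwint : IntegrableOn (fun x => w x * S₀ x) (Set.Icc 0 A))
    (hmass : ∀ m ∈ Set.Icc (0:ℝ) K,
      (∫ x in {x ∈ Set.Icc (0:ℝ) A | s m < w x}, S₀ x) = m)
    (hσ₀def : ∀ m ∈ Set.Icc (0:ℝ) K,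
      σ₀ m = ∫ x in {x ∈ Set.Icc (0:ℝ) A | w x ≤ s m}, w x * S₀ x)
    (hσ₀gt : ∀ m ∈ Set.Icc (0:ℝ) K, 1 < σ₀ m)
    (hσinf : ∀ m ∈ Set.Icc (0:ℝ) K, σinf m ∈ Set.Ico (0:ℝ) 1 ∧
      σinf m * Real.exp (-(σinf m)) = σ₀ m * Real.exp (-(σ₀ m)) * η)
    (hNdef : ∀ m ∈ Set.Icc (0:ℝ) K, N m = m +
      (∫ x in {x ∈ Set.Icc (0:ℝ) A | w x ≤ s m}, S₀ x) *
        Real.exp (σinf m - σ₀ m) * η) :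
    MonotoneOn N (Set.Icc 0 K) := by
  intro m₁ hm₁ m₂ hm₂ hle
  rcases hle.eq_or_lt with rfl | hlt
  · rfl
  have hS₀int : IntegrableOn S₀ (Icc 0 A) := hS₀c.integrableOn_Icc
  have hC : ∀ m ∈ Icc (0:ℝ) K,
      ∫ x in {x ∈ Icc (0:ℝ) A | w x ≤ s m}, S₀ x = (∫ x in Icc 0 A, S₀ x) - m := fun m hm => by
    linarith [setIntegral_sublevel_add_superlevel hwm hS₀int (s m), hmass m hm]
  have hs : s m₂ ≤ s m₁ := by
    by_contra! hs
    have := monotone_setIntegral_sublevel (w := w) measurableSet_Icc hS₀int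
      (fun x hx => (hS₀pos x hx).le) hs.le
    simp only [hC m₁ hm₁, hC m₂ hm₂] at this
    linarith
  have hσ₀ : σ₀ m₂ ≤ σ₀ m₁ := by
    rw [hσ₀def m₁ hm₁, hσ₀def m₂ hm₂]
    exact monotone_setIntegral_sublevel measurableSet_Icc hwint
      (fun x hx => (mul_pos (hwpos x hx) (hS₀pos x hx)).le) hs
  obtain ⟨⟨-, hσinf₁⟩, heq₁⟩ := hσinf m₁ hm₁
  obtain ⟨⟨-, hσinf₂⟩, heq₂⟩ := hσinf m₂ hm₂
  have hE : exp (σinf m₁ - σ₀ m₁) ≤ exp (σinf m₂ - σ₀ m₂) := exp_le_exp.2 <|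
    sub_le_sub_of_mul_exp_neg_eq hη.1.le (hσ₀gt m₂ hm₂).le hσ₀ hσinf₁.le hσinf₂.le heq₁ heq₂
  have hE₁η : exp (σinf m₁ - σ₀ m₁) * η ≤ 1 :=
    mul_le_one₀ (exp_le_one_iff.2 (by linarith [hσ₀gt m₁ hm₁])) hη.1.le hη.2.le
  have hC₂ : 0 ≤ (∫ x in Icc 0 A, S₀ x) - m₂ := hC m₂ hm₂ ▸
    setIntegral_nonneg (measurableSet_Icc.inter (measurableSet_le hwm measurable_const))
      fun x hx => (hS₀pos x hx.1).le
  rw [hNdef m₁ hm₁, hNdef m₂ hm₂, hC m₁ hm₁, hC m₂ hm₂]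
  linarith [mul_nonneg (sub_nonneg.2 hlt.le) (sub_nonneg.2 hE₁η),
    mul_nonneg (mul_nonneg hC₂ hη.1.le) (sub_nonneg.2 hE)]

/-- Monotonicity in the total vaccine budget for threshold strategies
(reduced form): `m ↦ N(m)` is nondecreasing on `[0,K]`. -/
theorem stmt19 (A K η : ℝ) (hA : 0 < A) (hK : 0 < K) (hη : η ∈ Set.Ioo (0:ℝ) 1)
    (S₀ w s σ₀ σinf N : ℝ → ℝ)
    (hS₀c : ContinuousOn S₀ (Set.Icc 0 A))
    (hS₀pos : ∀ x ∈ Set.Icc (0:ℝ) A, 0 < S₀ x)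
    (hwm : Measurable w) (hwpos : ∀ x ∈ Set.Icc (0:ℝ) A, 0 < w x)
    (hlevel : ∀ t > (0:ℝ), volume {x ∈ Set.Icc (0:ℝ) A | w x = t} = 0)
    (hwint : IntegrableOn (fun x => w x * S₀ x) (Set.Icc 0 A))
    (hspos : ∀ m ∈ Set.Icc (0:ℝ) K, 0 < s m)
    (hmass : ∀ m ∈ Set.Icc (0:ℝ) K,
      (∫ x in {x ∈ Set.Icc (0:ℝ) A | s m < w x}, S₀ x) = m)
    (hσ₀def : ∀ m ∈ Set.Icc (0:ℝ) K,
      σ₀ m = ∫ x in {x ∈ Set.Icc (0:ℝ) A | w x ≤ s m}, w x * S₀ x)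
    (hσ₀gt : ∀ m ∈ Set.Icc (0:ℝ) K, 1 < σ₀ m)
    (hσinf : ∀ m ∈ Set.Icc (0:ℝ) K, σinf m ∈ Set.Ico (0:ℝ) 1 ∧
      σinf m * Real.exp (-(σinf m)) = σ₀ m * Real.exp (-(σ₀ m)) * η)
    (hNdef : ∀ m ∈ Set.Icc (0:ℝ) K, N m = m +
      (∫ x in {x ∈ Set.Icc (0:ℝ) A | w x ≤ s m}, S₀ x) *
        Real.exp (σinf m - σ₀ m) * η) :
    MonotoneOn N (Set.Icc 0 K) :=
  stmt19_general A K η hη S₀ w s σ₀ σinf N hS₀c hS₀pos hwm hwpos hwint hmass hσ₀def hσ₀gt hσinf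
    hNdef
end
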